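/- Let {v_k}, {u_k}, {a_k}, {b_k} be sequences of nonnegative real random variables adapted to a filtration F_k with E[v_{k+1} | F_k] ≤ (1 + a_k) v_k − u_k + b_k almost surely for all k, and suppose Σ a_k < ∞ and Σ b_k < ∞ almost surely. Then Σ u_k < ∞ almost surely and v_k converges almost surely to a nonnegative random variable. -/

import Mathlib

/-!
Dividing by `∏ j < k, (1 + a j)`, which converges since `∑ a` does, reduces the recursion to
`E[v (k+1) | F k] ≤ v k - u k + b k`. Then `v n + ∑ j < n, (u j - b j)` would be a
supermartingale, but neither `u` nor `b` need be integrable, so it is stopped just before the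
partial sums of `b` exceed a level `M`. The stopped process is an integrable supermartingale bounded
below by `-M`, hence converges almost surely; on the event `∑ b ≤ M` it is not stopped at all,
and letting `M` range over `ℕ` exhausts the event `∑ b < ∞`. Convergence of
`v n + ∑ j < n, u j` with `u ≥ 0, v ≥ 0` gives both conclusions.
-/

open MeasureTheory Filter Finset Topology

section Deterministic

variable {f g h χ : ℕ → ℝ} {M : ℝ}

theorem mul_le_add_sum_mul_sub_of_antitone (hf : ∀ n, 0 ≤ f n) (hχ : Antitone χ)
    (hχ0 : χ 0 ≤ 1) (n : ℕ) :
    χ n * f n ≤ f 0 + ∑ j ∈ range n, χ j * (f (j + 1) - f j) := by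
  induction n with
  | zero => simpa using mul_le_of_le_one_left (hf 0) hχ0
  | succ n ih =>
    have : χ (n + 1) * f (n + 1) ≤ χ n * f (n + 1) :=
      mul_le_mul_of_nonneg_right (hχ n.le_succ) (hf _)
    rw [sum_range_succ]
    linarith

noncomputable def partialSumLeIndicator (h : ℕ → ℝ) (M : ℝ) (k : ℕ) : ℝ :=
  if ∑ j ∈ range (k + 1), h j ≤ M then 1 else 0

theorem partialSumLeIndicator_nonneg (k : ℕ) : 0 ≤ partialSumLeIndicator h M k := by
  unfold partialSumLeIndicator; split_ifs <;> norm_num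

theorem partialSumLeIndicator_le_one (k : ℕ) : partialSumLeIndicator h M k ≤ 1 := by
  unfold partialSumLeIndicator; split_ifs <;> norm_num

theorem partialSumLeIndicator_antitone (hh : ∀ n, 0 ≤ h n) :
    Antitone (partialSumLeIndicator h M) := by
  refine antitone_nat_of_succ_le fun k => ?_
  unfold partialSumLeIndicator
  split_ifs with hk hk' <;> try norm_num
  exact hk' (le_trans (by rw [sum_range_succ _ (k + 1)]; exact le_add_of_nonneg_right (hh _)) hk)

theorem partialSumLeIndicator_mul_le (hh : ∀ n, 0 ≤ h n) (hM : 0 ≤ M) (k : ℕ) :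
    partialSumLeIndicator h M k * h k ≤ M := by
  unfold partialSumLeIndicator
  split_ifs with hk
  · exact (one_mul (h k)).le.trans
      ((single_le_sum (fun j _ => hh j) (self_mem_range_succ k)).trans hk)
  · simpa using hM

theorem sum_partialSumLeIndicator_mul_le (hh : ∀ n, 0 ≤ h n) (hM : 0 ≤ M) (n : ℕ) :
    ∑ j ∈ range n, partialSumLeIndicator h M j * h j ≤ M := by
  induction n with
  | zero => simpa using hM
  | succ n ih =>
    by_cases hn : ∑ j ∈ range (n + 1), h j ≤ M
    · refine le_trans (sum_le_sum fun j _ => ?_) hn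
      exact mul_le_of_le_one_left (hh j) (partialSumLeIndicator_le_one j)
    · rw [sum_range_succ, partialSumLeIndicator, if_neg hn, zero_mul, add_zero]
      exact ih

theorem neg_le_add_sum_partialSumLeIndicator_mul (hf : ∀ n, 0 ≤ f n) (hg : ∀ n, 0 ≤ g n)
    (hh : ∀ n, 0 ≤ h n) (hM : 0 ≤ M) (n : ℕ) :
    -M ≤ f 0 + ∑ j ∈ range n,
      partialSumLeIndicator h M j * (f (j + 1) - (f j - g j + h j)) := by
  set χ := partialSumLeIndicator h M
  have hsplit : ∀ j, χ j * (f (j + 1) - (f j - g j + h j)) =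
      χ j * (f (j + 1) - f j) + χ j * g j - χ j * h j := fun j => by ring
  have htel := mul_le_add_sum_mul_sub_of_antitone hf (partialSumLeIndicator_antitone (M := M) hh)
    (partialSumLeIndicator_le_one 0) n
  have hχf : 0 ≤ χ n * f n := mul_nonneg (partialSumLeIndicator_nonneg n) (hf n)
  have hχg : 0 ≤ ∑ j ∈ range n, χ j * g j :=
    sum_nonneg fun j _ => mul_nonneg (partialSumLeIndicator_nonneg j) (hg j)
  simp only [hsplit, sum_sub_distrib, sum_add_distrib]
  linarith [sum_partialSumLeIndicator_mul_le hh hM n]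

theorem summable_and_exists_tendsto_of_tendsto_add_sum {c : ℝ} (hf : ∀ n, 0 ≤ f n)
    (hg : ∀ n, 0 ≤ g n) (hh : Summable h)
    (hlim : Tendsto (fun n => f 0 + ∑ j ∈ range n, (f (j + 1) - (f j - g j + h j)))
      atTop (𝓝 c)) :
    Summable g ∧ ∃ d, Tendsto f atTop (𝓝 d) := by
  have htel : ∀ n, f 0 + ∑ j ∈ range n, (f (j + 1) - (f j - g j + h j)) + ∑ j ∈ range n, h j =
      f n + ∑ j ∈ range n, g j := fun n => by
    have : ∀ j, f (j + 1) - (f j - g j + h j) = (f (j + 1) - f j) + g j - h j := fun j => by ring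
    rw [sum_congr rfl fun j _ => this j, sum_sub_distrib, sum_add_distrib, sum_range_sub]
    ring
  have hfg : Tendsto (fun n => f n + ∑ j ∈ range n, g j) atTop (𝓝 (c + ∑' j, h j)) := by
    simpa only [htel] using hlim.add hh.hasSum.tendsto_sum_nat
  obtain ⟨K, hK⟩ := hfg.bddAbove_range
  have hgsum : Summable g := summable_of_sum_range_le hg fun n =>
    (le_add_of_nonneg_left (hf n)).trans (hK ⟨n, rfl⟩)
  refine ⟨hgsum, c + ∑' j, h j - ∑' j, g j, ?_⟩
  simpa using hfg.sub hgsum.hasSum.tendsto_sum_nat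

theorem exists_tendsto_prod_range_one_add (hf : Summable f) :
    ∃ L, Tendsto (fun k => ∏ j ∈ range k, (1 + f j)) atTop (𝓝 L) :=
  ⟨_, (Real.multipliable_one_add_of_summable hf).hasProd.tendsto_prod_nat⟩

end Deterministic

section Conditional

variable {Ω : Type*} {m m0 : MeasurableSpace Ω} {μ : Measure Ω}

theorem condExp_mul_le_mul_of_condExp_le {c f g : Ω → ℝ} {R : ℝ} (hm : m ≤ m0)
    (hc : StronglyMeasurable[m] c) (hc0 : ∀ ω, 0 ≤ c ω) (hcR : ∀ ω, c ω ≤ R)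
    (hf : Integrable f μ) (hfg : μ[f|m] ≤ᵐ[μ] g) :
    μ[fun ω => c ω * f ω|m] ≤ᵐ[μ] fun ω => c ω * g ω := by
  have hcf : Integrable (c * f) μ :=
    hf.bdd_mul (hc.mono hm).aestronglyMeasurable
      (ae_of_all _ fun ω => by rw [Real.norm_eq_abs, abs_of_nonneg (hc0 ω)]; exact hcR ω)
  filter_upwards [condExp_mul_of_stronglyMeasurable_left hc hcf hf, hfg] with ω hpull hω
  exact hpull.trans_le (mul_le_mul_of_nonneg_left hω (hc0 ω))

theorem MeasureTheory.Supermartingale.exists_ae_tendsto_of_forall_ae_le [IsFiniteMeasure μ]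
    {ℱ : Filtration ℕ m0} {f : ℕ → Ω → ℝ} {M : ℝ} (hf : Supermartingale f ℱ μ)
    (hM : ∀ n, ∀ᵐ ω ∂μ, M ≤ f n ω) :
    ∀ᵐ ω ∂μ, ∃ c, Tendsto (fun n => f n ω) atTop (𝓝 c) := by
  set C := ∫ ω, f 0 ω ∂μ + 2 * |M| * μ.real Set.univ
  have hL1 : ∀ n, eLpNorm (-f n) 1 μ ≤ C.toNNReal := by
    intro n
    rw [eLpNorm_neg, eLpNorm_one_eq_lintegral_enorm,
      ← ofReal_integral_norm_eq_lintegral_enorm (hf.integrable n)]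
    refine ENNReal.ofReal_le_ofReal ?_
    have hnorm : ∀ᵐ ω ∂μ, ‖f n ω‖ ≤ f n ω + 2 * |M| := by
      filter_upwards [hM n] with ω hω
      rw [Real.norm_eq_abs]
      cases abs_cases (f n ω) <;> cases abs_cases M <;> linarith
    calc ∫ ω, ‖f n ω‖ ∂μ ≤ ∫ ω, (f n ω + 2 * |M|) ∂μ :=
          integral_mono_ae (hf.integrable n).norm ((hf.integrable n).add (integrable_const _))
            hnorm
      _ = ∫ ω, f n ω ∂μ + 2 * |M| * μ.real Set.univ := by
          rw [integral_add (hf.integrable n) (integrable_const _), integral_const, smul_eq_mul,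
            mul_comm]
      _ ≤ C := add_le_add_left (by simpa using hf.setIntegral_le n.zero_le MeasurableSet.univ) _
  filter_upwards [hf.neg.exists_ae_tendsto_of_bdd hL1] with ω ⟨c, hc⟩
  exact ⟨-c, by simpa using hc.neg⟩

end Conditional

section Truncation

variable {Ω : Type*} {m0 : MeasurableSpace Ω} {μ : Measure Ω} {F : Filtration ℕ m0}
  {v u b : ℕ → Ω → ℝ} {M : ℝ}

/-- The process `v n + ∑ j < n, (u j - b j)`, stopped just before the partial sums of `b` exceed
`M`. It is written through its increments because `u` and `b` need not be integrable. -/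
noncomputable def truncatedProcess (v u b : ℕ → Ω → ℝ) (M : ℝ) (n : ℕ) (ω : Ω) : ℝ :=
  v 0 ω + ∑ j ∈ range n,
    partialSumLeIndicator (b · ω) M j * (v (j + 1) ω - (v j ω - u j ω + b j ω))

theorem truncatedProcess_zero : truncatedProcess v u b M 0 = v 0 := by
  funext ω; simp [truncatedProcess]

theorem truncatedProcess_succ (n : ℕ) :
    truncatedProcess v u b M (n + 1) = fun ω =>
      (truncatedProcess v u b M n ω -
        partialSumLeIndicator (b · ω) M n * (v n ω - u n ω + b n ω)) +
      partialSumLeIndicator (b · ω) M n * v (n + 1) ω := by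
  funext ω; simp only [truncatedProcess, sum_range_succ]; ring

theorem measurable_partialSumLeIndicator (hb : Adapted F b) (M : ℝ) (k : ℕ) :
    Measurable[F k] fun ω => partialSumLeIndicator (b · ω) M k :=
  Measurable.ite (measurableSet_le (Finset.measurable_sum _ fun j hj =>
      (hb j).mono (F.mono (Nat.lt_succ_iff.mp (mem_range.mp hj))) le_rfl) measurable_const)
    measurable_const measurable_const

theorem adapted_truncatedProcess (hv : Adapted F v) (hu : Adapted F u) (hb : Adapted F b) :
    Adapted F (truncatedProcess v u b M) := by
  intro n
  induction n with
  | zero => rw [truncatedProcess_zero]; exact hv 0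
  | succ n ih =>
    have hχ := measurable_partialSumLeIndicator hb M n
    rw [truncatedProcess_succ]
    exact ((ih.sub (hχ.mul (((hv n).sub (hu n)).add (hb n)))).mono (F.mono n.le_succ) le_rfl).add
      ((hχ.mono (F.mono n.le_succ) le_rfl).mul (hv (n + 1)))

theorem integrable_partialSumLeIndicator_mul (hb : Adapted F b) {f : Ω → ℝ}
    (hf : Integrable f μ) (k : ℕ) :
    Integrable (fun ω => partialSumLeIndicator (b · ω) M k * f ω) μ :=
  hf.bdd_mul ((measurable_partialSumLeIndicator hb M k).mono (F.le k) le_rfl).aestronglyMeasurable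
    (ae_of_all _ fun ω => by
      rw [Real.norm_eq_abs, abs_of_nonneg (partialSumLeIndicator_nonneg k)]
      exact partialSumLeIndicator_le_one k)

/-- The truncated drift lies between `0` and `v k + M`. -/
theorem integrable_partialSumLeIndicator_mul_drift [IsFiniteMeasure μ] (hv : Adapted F v)
    (hu : Adapted F u) (hb : Adapted F b) (hvint : ∀ k, Integrable (v k) μ) (hv0 : ∀ k ω, 0 ≤ v k ω)
    (hu0 : ∀ k ω, 0 ≤ u k ω) (hb0 : ∀ k ω, 0 ≤ b k ω) (hM : 0 ≤ M) (k : ℕ)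
    (hrec : μ[v (k + 1)|F k] ≤ᵐ[μ] fun ω => v k ω - u k ω + b k ω) :
    Integrable (fun ω => partialSumLeIndicator (b · ω) M k * (v k ω - u k ω + b k ω)) μ := by
  refine ((hvint k).add (integrable_const M)).mono'
    ((((measurable_partialSumLeIndicator hb M k).mul
      (((hv k).sub (hu k)).add (hb k))).mono (F.le k) le_rfl).aestronglyMeasurable) ?_
  filter_upwards [hrec, condExp_nonneg (m := F k) (ae_of_all μ (hv0 (k + 1)))] with ω hω hω0
  have hdrift : 0 ≤ v k ω - u k ω + b k ω := (hω0.trans hω :)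
  have hχb := partialSumLeIndicator_mul_le (fun j => hb0 j ω) hM k
  have hχv : partialSumLeIndicator (b · ω) M k * v k ω ≤ v k ω :=
    mul_le_of_le_one_left (hv0 k ω) (partialSumLeIndicator_le_one k)
  have hχu : 0 ≤ partialSumLeIndicator (b · ω) M k * u k ω :=
    mul_nonneg (partialSumLeIndicator_nonneg k) (hu0 k ω)
  rw [Real.norm_eq_abs, abs_of_nonneg (mul_nonneg (partialSumLeIndicator_nonneg k) hdrift)]
  simp only [Pi.add_apply]
  linarith [mul_add (partialSumLeIndicator (b · ω) M k) (v k ω - u k ω) (b k ω),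
    mul_sub (partialSumLeIndicator (b · ω) M k) (v k ω) (u k ω)]

theorem integrable_truncatedProcess [IsFiniteMeasure μ] (hv : Adapted F v)
    (hu : Adapted F u) (hb : Adapted F b) (hvint : ∀ k, Integrable (v k) μ)
    (hv0 : ∀ k ω, 0 ≤ v k ω) (hu0 : ∀ k ω, 0 ≤ u k ω) (hb0 : ∀ k ω, 0 ≤ b k ω) (hM : 0 ≤ M)
    (hrec : ∀ k, μ[v (k + 1)|F k] ≤ᵐ[μ] fun ω => v k ω - u k ω + b k ω) (n : ℕ) :
    Integrable (truncatedProcess v u b M n) μ := by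
  induction n with
  | zero => rw [truncatedProcess_zero]; exact hvint 0
  | succ n ih =>
    rw [truncatedProcess_succ]
    exact (ih.sub (integrable_partialSumLeIndicator_mul_drift hv hu hb hvint hv0 hu0 hb0 hM n
      (hrec n))).add (integrable_partialSumLeIndicator_mul hb (hvint (n + 1)) n)

theorem supermartingale_truncatedProcess [IsFiniteMeasure μ] (hv : Adapted F v)
    (hu : Adapted F u) (hb : Adapted F b) (hvint : ∀ k, Integrable (v k) μ)
    (hv0 : ∀ k ω, 0 ≤ v k ω) (hu0 : ∀ k ω, 0 ≤ u k ω) (hb0 : ∀ k ω, 0 ≤ b k ω) (hM : 0 ≤ M)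
    (hrec : ∀ k, μ[v (k + 1)|F k] ≤ᵐ[μ] fun ω => v k ω - u k ω + b k ω) :
    Supermartingale (truncatedProcess v u b M) F μ := by
  have hint := integrable_truncatedProcess hv hu hb hvint hv0 hu0 hb0 hM hrec
  refine supermartingale_nat (adapted_truncatedProcess hv hu hb).stronglyAdapted hint fun n => ?_
  set χ := fun ω => partialSumLeIndicator (b · ω) M n
  set H := fun ω => truncatedProcess v u b M n ω - χ ω * (v n ω - u n ω + b n ω)
  have hH : StronglyMeasurable[F n] H :=
    ((adapted_truncatedProcess hv hu hb n).sub ((measurable_partialSumLeIndicator hb M n).mul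
      (((hv n).sub (hu n)).add (hb n)))).stronglyMeasurable
  have hH_int : Integrable H μ := (hint n).sub
    (integrable_partialSumLeIndicator_mul_drift hv hu hb hvint hv0 hu0 hb0 hM n (hrec n))
  have hχv_int := integrable_partialSumLeIndicator_mul (M := M) hb (hvint (n + 1)) n
  have hsucc : truncatedProcess v u b M (n + 1) = H + fun ω => χ ω * v (n + 1) ω :=
    truncatedProcess_succ n
  rw [hsucc]
  filter_upwards [condExp_add hH_int hχv_int (F n),
    condExp_mul_le_mul_of_condExp_le (F.le n)
      (measurable_partialSumLeIndicator hb M n).stronglyMeasurable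
      (fun _ => partialSumLeIndicator_nonneg n) (fun _ => partialSumLeIndicator_le_one n)
      (hvint (n + 1)) (hrec n)] with ω hadd hle
  rw [hadd, Pi.add_apply, condExp_of_stronglyMeasurable (F.le n) hH hH_int]
  simp only [H]
  linarith

theorem ae_summable_and_exists_tendsto_of_condExp_le [IsFiniteMeasure μ] (hv : Adapted F v)
    (hu : Adapted F u) (hb : Adapted F b) (hvint : ∀ k, Integrable (v k) μ)
    (hv0 : ∀ k ω, 0 ≤ v k ω) (hu0 : ∀ k ω, 0 ≤ u k ω) (hb0 : ∀ k ω, 0 ≤ b k ω)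
    (hbsum : ∀ᵐ ω ∂μ, Summable (b · ω))
    (hrec : ∀ k, μ[v (k + 1)|F k] ≤ᵐ[μ] fun ω => v k ω - u k ω + b k ω) :
    ∀ᵐ ω ∂μ, Summable (u · ω) ∧ ∃ c, Tendsto (v · ω) atTop (𝓝 c) := by
  have hconv (M : ℕ) : ∀ᵐ ω ∂μ, ∃ c, Tendsto (truncatedProcess v u b M · ω) atTop (𝓝 c) :=
    (supermartingale_truncatedProcess hv hu hb hvint hv0 hu0 hb0 M.cast_nonneg hrec
      ).exists_ae_tendsto_of_forall_ae_le fun n => ae_of_all μ fun ω =>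
        neg_le_add_sum_partialSumLeIndicator_mul (fun k => hv0 k ω) (fun k => hu0 k ω)
          (fun k => hb0 k ω) M.cast_nonneg n
  filter_upwards [ae_all_iff.2 hconv, hbsum] with ω hω hsum
  obtain ⟨M, hM⟩ := exists_nat_ge (∑' j, b j ω)
  obtain ⟨c, hc⟩ := hω M
  refine summable_and_exists_tendsto_of_tendsto_add_sum (fun k => hv0 k ω) (fun k => hu0 k ω)
    hsum (hc.congr fun n => ?_)
  -- at `ω` the partial sums of `b` never exceed `M`, so the truncation is inactive
  refine congrArg _ (sum_congr rfl fun j _ => ?_)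
  rw [partialSumLeIndicator, if_pos ((Summable.sum_le_tsum _ (fun i _ => hb0 i ω) hsum).trans hM),
    one_mul]

end Truncation

section Normalization

variable {Ω : Type*} {m0 : MeasurableSpace Ω} {μ : Measure Ω} {F : Filtration ℕ m0}
  {v u a b : ℕ → Ω → ℝ}

noncomputable def prodOneAdd (a : ℕ → Ω → ℝ) (k : ℕ) (ω : Ω) : ℝ :=
  ∏ j ∈ range k, (1 + a j ω)

theorem one_le_prodOneAdd (ha0 : ∀ k ω, 0 ≤ a k ω) (k : ℕ) (ω : Ω) : 1 ≤ prodOneAdd a k ω :=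
  one_le_prod fun j _ => le_add_of_nonneg_right (ha0 j ω)

theorem prodOneAdd_pos (ha0 : ∀ k ω, 0 ≤ a k ω) (k : ℕ) (ω : Ω) : 0 < prodOneAdd a k ω :=
  zero_lt_one.trans_le (one_le_prodOneAdd ha0 k ω)

theorem prodOneAdd_succ (k : ℕ) (ω : Ω) :
    prodOneAdd a (k + 1) ω = prodOneAdd a k ω * (1 + a k ω) :=
  prod_range_succ _ _

theorem measurable_prodOneAdd (ha : Adapted F a) {k n : ℕ} (hkn : k ≤ n + 1) :
    Measurable[F n] (prodOneAdd a k) :=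
  Finset.measurable_prod _ fun j hj => measurable_const.add
    ((ha j).mono (F.mono (by have := mem_range.mp hj; omega)) le_rfl)

theorem inv_prodOneAdd_nonneg (ha0 : ∀ k ω, 0 ≤ a k ω) (k : ℕ) (ω : Ω) :
    0 ≤ (prodOneAdd a k ω)⁻¹ :=
  inv_nonneg.2 (prodOneAdd_pos ha0 k ω).le

theorem inv_prodOneAdd_le_one (ha0 : ∀ k ω, 0 ≤ a k ω) (k : ℕ) (ω : Ω) :
    (prodOneAdd a k ω)⁻¹ ≤ 1 :=
  inv_le_one_of_one_le₀ (one_le_prodOneAdd ha0 k ω)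

theorem condExp_inv_prodOneAdd_mul_le (ha : Adapted F a) (ha0 : ∀ k ω, 0 ≤ a k ω) {k : ℕ}
    (hvint : Integrable (v (k + 1)) μ)
    (hrec : μ[v (k + 1)|F k] ≤ᵐ[μ] fun ω => (1 + a k ω) * v k ω - u k ω + b k ω) :
    μ[fun ω => (prodOneAdd a (k + 1) ω)⁻¹ * v (k + 1) ω|F k] ≤ᵐ[μ] fun ω =>
      (prodOneAdd a k ω)⁻¹ * v k ω - (prodOneAdd a (k + 1) ω)⁻¹ * u k ω +
        (prodOneAdd a (k + 1) ω)⁻¹ * b k ω := by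
  filter_upwards [condExp_mul_le_mul_of_condExp_le (F.le k)
    (measurable_prodOneAdd ha le_rfl).inv.stronglyMeasurable (inv_prodOneAdd_nonneg ha0 (k + 1))
    (inv_prodOneAdd_le_one ha0 (k + 1)) hvint hrec] with ω hω
  refine hω.trans_eq ?_
  have hprod := (prodOneAdd_pos ha0 k ω).ne'
  have hfactor : 1 + a k ω ≠ 0 := by linarith [ha0 k ω]
  rw [Pi.inv_apply, prodOneAdd_succ]
  field_simp

theorem robbins_siegmund_of_nonneg [IsFiniteMeasure μ] (hv : Adapted F v) (hu : Adapted F u)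
    (ha : Adapted F a) (hb : Adapted F b) (hvint : ∀ k, Integrable (v k) μ)
    (hv0 : ∀ k ω, 0 ≤ v k ω) (hu0 : ∀ k ω, 0 ≤ u k ω) (ha0 : ∀ k ω, 0 ≤ a k ω)
    (hb0 : ∀ k ω, 0 ≤ b k ω) (hasum : ∀ᵐ ω ∂μ, Summable (a · ω))
    (hbsum : ∀ᵐ ω ∂μ, Summable (b · ω))
    (hrec : ∀ k, μ[v (k + 1)|F k] ≤ᵐ[μ] fun ω => (1 + a k ω) * v k ω - u k ω + b k ω) :
    ∀ᵐ ω ∂μ, Summable (u · ω) ∧ ∃ c, Tendsto (v · ω) atTop (𝓝 c) := by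
  set α := prodOneAdd a
  have hα0 k ω : α k ω ≠ 0 := (prodOneAdd_pos ha0 k ω).ne'
  have hαinv0 := inv_prodOneAdd_nonneg ha0
  have hαinv1 := inv_prodOneAdd_le_one ha0
  have hαm {k n : ℕ} (hkn : k ≤ n + 1) : Measurable[F n] (α k) := measurable_prodOneAdd ha hkn
  have hnormalized := ae_summable_and_exists_tendsto_of_condExp_le
    (v := fun k ω => (α k ω)⁻¹ * v k ω) (u := fun k ω => (α (k + 1) ω)⁻¹ * u k ω)
    (b := fun k ω => (α (k + 1) ω)⁻¹ * b k ω)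
    (fun k => (hαm k.le_succ).inv.mul (hv k)) (fun k => (hαm le_rfl).inv.mul (hu k))
    (fun k => (hαm le_rfl).inv.mul (hb k))
    (fun k => (hvint k).bdd_mul ((hαm k.le_succ).inv.mono (F.le k) le_rfl).aestronglyMeasurable
      (ae_of_all _ fun ω => by
        rw [Real.norm_eq_abs, abs_of_nonneg (hαinv0 k ω)]; exact hαinv1 k ω))
    (fun k ω => mul_nonneg (hαinv0 k ω) (hv0 k ω)) (fun k ω => mul_nonneg (hαinv0 _ ω) (hu0 k ω))
    (fun k ω => mul_nonneg (hαinv0 _ ω) (hb0 k ω))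
    (hbsum.mono fun ω hω => hω.of_nonneg_of_le (fun k => mul_nonneg (hαinv0 _ ω) (hb0 k ω))
      fun k => mul_le_of_le_one_left (hb0 k ω) (hαinv1 _ ω))
    fun k => condExp_inv_prodOneAdd_mul_le ha ha0 (hvint (k + 1)) (hrec k)
  filter_upwards [hnormalized, hasum] with ω ⟨hu', c, hc⟩ hsa
  obtain ⟨L, hL⟩ := exists_tendsto_prod_range_one_add hsa
  obtain ⟨E, hE⟩ := hL.bddAbove_range
  refine ⟨(hu'.mul_left E).of_nonneg_of_le (fun k => hu0 k ω) fun k => ?_, L * c,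
    (hL.mul hc).congr fun k => mul_inv_cancel_left₀ (hα0 k ω) _⟩
  calc u k ω = α (k + 1) ω * ((α (k + 1) ω)⁻¹ * u k ω) := (mul_inv_cancel_left₀ (hα0 _ ω) _).symm
    _ ≤ E * ((α (k + 1) ω)⁻¹ * u k ω) :=
      mul_le_mul_of_nonneg_right (hE ⟨k + 1, rfl⟩) (mul_nonneg (hαinv0 _ ω) (hu0 k ω))

end Normalization

/-- Robbins–Siegmund almost-supermartingale convergence theorem. -/
theorem robbins_siegmund {Ω : Type*} {m0 : MeasurableSpace Ω} {μ : Measure Ω}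
    [IsProbabilityMeasure μ] (F : Filtration ℕ m0)
    (v u a b : ℕ → Ω → ℝ)
    (hv : Adapted F v) (hu : Adapted F u) (ha : Adapted F a) (hb : Adapted F b)
    (hvint : ∀ k, Integrable (v k) μ)
    (hv0 : ∀ k, 0 ≤ᵐ[μ] v k) (hu0 : ∀ k, 0 ≤ᵐ[μ] u k)
    (ha0 : ∀ k, 0 ≤ᵐ[μ] a k) (hb0 : ∀ k, 0 ≤ᵐ[μ] b k)
    (hasum : ∀ᵐ ω ∂μ, Summable fun k => a k ω)
    (hbsum : ∀ᵐ ω ∂μ, Summable fun k => b k ω)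
    (hrec : ∀ k, μ[v (k + 1) | F k] ≤ᵐ[μ]
      fun ω => (1 + a k ω) * v k ω - u k ω + b k ω) :
    ∀ᵐ ω ∂μ, (Summable fun k => u k ω) ∧
      ∃ c : ℝ, 0 ≤ c ∧ Tendsto (fun k => v k ω) atTop (nhds c) := by
  have hpos {f : ℕ → Ω → ℝ} (hf : ∀ k, 0 ≤ᵐ[μ] f k) :
      ∀ᵐ ω ∂μ, ∀ k, max (f k ω) 0 = f k ω :=
    ae_all_iff.2 fun k => (hf k).mono fun ω h => max_eq_left h
  have hsummable {f : ℕ → Ω → ℝ} (hf : ∀ k, 0 ≤ᵐ[μ] f k)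
      (hfsum : ∀ᵐ ω ∂μ, Summable fun k => f k ω) :
      ∀ᵐ ω ∂μ, Summable fun k => max (f k ω) 0 := by
    filter_upwards [hpos hf, hfsum] with ω hω h
    simpa only [hω] using h
  have hrec' k : μ[fun ω => max (v (k + 1) ω) 0 | F k] ≤ᵐ[μ] fun ω =>
      (1 + max (a k ω) 0) * max (v k ω) 0 - max (u k ω) 0 + max (b k ω) 0 := by
    have hv_eq : (fun ω => max (v (k + 1) ω) 0) =ᵐ[μ] v (k + 1) :=
      (hv0 (k + 1)).mono fun ω h => max_eq_left h
    filter_upwards [condExp_congr_ae (m := F k) hv_eq,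
      hrec k, hpos hv0, hpos hu0, hpos ha0, hpos hb0] with ω hcongr hω hvω huω haω hbω
    rw [hcongr, hvω, huω, haω, hbω]
    exact hω
  filter_upwards [robbins_siegmund_of_nonneg (fun k => (hv k).max measurable_const)
      (fun k => (hu k).max measurable_const) (fun k => (ha k).max measurable_const)
      (fun k => (hb k).max measurable_const) (fun k => (hvint k).pos_part)
      (fun _ _ => le_max_right _ _) (fun _ _ => le_max_right _ _) (fun _ _ => le_max_right _ _)
      (fun _ _ => le_max_right _ _) (hsummable ha0 hasum) (hsummable hb0 hbsum) hrec',
    hpos hv0, hpos hu0] with ω ⟨hsu, c, hc⟩ hvω huω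
  simp only [hvω, huω] at hsu hc
  exact ⟨hsu, c, ge_of_tendsto' hc fun k => hvω k ▸ le_max_right _ _, hc⟩
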